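/- (Scalarization and dualization commute.) For all y* ∈ Y* and z* ∈ C+∖{0}: φ_{h,z*}(y*) = inf_{x ∈ X} λ_{z*}(x,y*), i.e. inf{z*(z) : z ∈ h(y*,z*)} = inf_{x ∈ X} [φ_{f,z*}(x) + φ_{g,y*}(x)]. -/

import Mathlib

open Set Pointwise Topology Filter

noncomputable section

variable {X Y Z : Type*}
  [AddCommGroup X] [Module ℝ X] [TopologicalSpace X] [IsTopologicalAddGroup X]
  [ContinuousSMul ℝ X] [LocallyConvexSpace ℝ X]
  [AddCommGroup Y] [Module ℝ Y] [TopologicalSpace Y] [IsTopologicalAddGroup Y]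
  [ContinuousSMul ℝ Y] [LocallyConvexSpace ℝ Y]
  [AddCommGroup Z] [Module ℝ Z] [TopologicalSpace Z] [IsTopologicalAddGroup Z]
  [ContinuousSMul ℝ Z] [LocallyConvexSpace ℝ Z]

/-- The positive dual cone `C⁺`. -/
def posDual (C : Set Z) : Set (Z →L[ℝ] ℝ) := {z' | ∀ z ∈ C, 0 ≤ z' z}

/-- The halfspace `S(z*) = {z | 0 ≤ z*(z)}`. -/
def SPos (z' : Z →L[ℝ] ℝ) : Set Z := {z | 0 ≤ z' z}

/-- `S_{(y*,z*)}(y) = {z | y*(y) ≤ z*(z)}`. -/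
def SMap (y' : Y →L[ℝ] ℝ) (z' : Z →L[ℝ] ℝ) (y : Y) : Set Z := {z | y' y ≤ z' z}

/-- Scalarization: `inf {z*(z) | z ∈ A}` in `EReal` (inf ∅ = +∞). -/
def scal (z' : Z →L[ℝ] ℝ) (A : Set Z) : EReal := ⨅ z ∈ A, (z' z : EReal)

open Classical in
/-- Addition on `EReal` with the convention `(+∞) + (−∞) = (−∞) + (+∞) = +∞`. -/
def eadd (a b : EReal) : EReal := if a = ⊤ ∨ b = ⊤ then ⊤ else a + b

/-- The set-valued Lagrangian `l(x,y*,z*) = f(x) ⊕ cl ⋃_{y ∈ g(x)} S_{(y*,z*)}(y)`. -/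
def lag (f : X → Set Z) (g : X → Set Y) (x : X) (y' : Y →L[ℝ] ℝ) (z' : Z →L[ℝ] ℝ) :
    Set Z :=
  closure (f x + closure (⋃ y ∈ g x, SMap y' z' y))

/-- The dual objective `h(y*,z*) = cl ⋃_x l(x,y*,z*)`. -/
def dualObj (f : X → Set Z) (g : X → Set Y) (y' : Y →L[ℝ] ℝ) (z' : Z →L[ℝ] ℝ) : Set Z :=
  closure (⋃ x, lag f g x y' z')

/-- The value function `v(y) = cl ⋃ {f(x) | y ∈ g(x)}`. -/
def valFn (f : X → Set Z) (g : X → Set Y) (y : Y) : Set Z :=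
  closure (⋃ x ∈ {x | y ∈ g x}, f x)

/-! Scalarizing by `z*` turns each set operation in `h` into its scalar counterpart: closures are
invisible to the infimum of a continuous functional, unions become infima, Minkowski sums become
sums of infima (with `+∞` absorbing, as `A + ∅ = ∅`), and for `z* ≠ 0` the halfspace
`S_{(y*,z*)}(y)` scalarizes to `y*(y)`, so `⋃_{y ∈ g(x)} S_{(y*,z*)}(y)` scalarizes to
`φ_{g,y*}(x)`. -/

theorem EReal.iInf_add_iInf {ι κ : Sort*} [Nonempty ι] [Nonempty κ] {u : ι → EReal}
    {v : κ → EReal} (hu : ∀ i, u i ≠ ⊤) (hv : ∀ j, v j ≠ ⊤) :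
    (⨅ i, u i) + ⨅ j, v j = ⨅ i, ⨅ j, u i + v j := by
  have hu_inf : ⨅ i, u i ≠ ⊤ := ne_top_of_le_ne_top (hu (Classical.arbitrary ι)) (iInf_le _ _)
  have hv_inf : ⨅ j, v j ≠ ⊤ := ne_top_of_le_ne_top (hv (Classical.arbitrary κ)) (iInf_le _ _)
  calc (⨅ i, u i) + ⨅ j, v j = ⨅ i, u i + ⨅ j, v j :=
        Monotone.map_ciInf_of_continuousAt (f := (· + ⨅ j, v j))
          ((EReal.continuousAt_add (.inl hu_inf) (.inr hv_inf)).comp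
            (continuousAt_id.prodMk continuousAt_const))
          (fun _ _ h => add_le_add_left h _)
    _ = ⨅ i, ⨅ j, u i + v j := iInf_congr fun i =>
        Monotone.map_ciInf_of_continuousAt (f := (u i + ·))
          ((EReal.continuousAt_add (.inl (hu i)) (.inr hv_inf)).comp
            (continuousAt_const.prodMk continuousAt_id))
          (fun _ _ h => add_le_add_right h _)

section

variable {W E F : Type*} [AddCommGroup E] [Module ℝ E] [TopologicalSpace E]
  [AddCommGroup F] [Module ℝ F] [TopologicalSpace F]

theorem scal_empty (z' : E →L[ℝ] ℝ) : scal z' ∅ = ⊤ := by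
  simp [scal]

theorem scal_ne_top (z' : E →L[ℝ] ℝ) {A : Set E} (hA : A.Nonempty) : scal z' A ≠ ⊤ :=
  ne_top_of_le_ne_top (EReal.coe_ne_top (z' hA.some)) (iInf₂_le _ hA.some_mem)

theorem scal_closure (z' : E →L[ℝ] ℝ) (A : Set E) : scal z' (closure A) = scal z' A := by
  refine le_antisymm (biInf_mono subset_closure) (le_iInf₂ fun z hz => ?_)
  have hclosed : IsClosed {z | scal z' A ≤ z' z} :=
    isClosed_le continuous_const (continuous_coe_real_ereal.comp z'.continuous)
  exact closure_minimal (fun a ha => show scal z' A ≤ z' a from iInf₂_le a ha) hclosed hz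

theorem scal_iUnion {ι : Sort*} (z' : E →L[ℝ] ℝ) (s : ι → Set E) :
    scal z' (⋃ i, s i) = ⨅ i, scal z' (s i) :=
  iInf_iUnion s _

theorem scal_add (z' : E →L[ℝ] ℝ) (A B : Set E) :
    scal z' (A + B) = eadd (scal z' A) (scal z' B) := by
  rcases A.eq_empty_or_nonempty with rfl | hA
  · simp [eadd, scal_empty]
  rcases B.eq_empty_or_nonempty with rfl | hB
  · simp [eadd, scal_empty]
  have : Nonempty A := hA.to_subtype
  have : Nonempty B := hB.to_subtype
  rw [eadd, if_neg (not_or.2 ⟨scal_ne_top z' hA, scal_ne_top z' hB⟩), scal, ← image2_add,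
    iInf_image2]
  simp only [scal, iInf_subtype', map_add, EReal.coe_add]
  exact (EReal.iInf_add_iInf (fun _ => EReal.coe_ne_top _) (fun _ => EReal.coe_ne_top _)).symm

theorem scal_SMap (y' : F →L[ℝ] ℝ) {z' : E →L[ℝ] ℝ} (hz' : z' ≠ 0) (y : F) :
    scal z' (SMap y' z' y) = y' y := by
  obtain ⟨w, hw⟩ := LinearMap.surjective (f := (z' : E →ₗ[ℝ] ℝ)) (by exact_mod_cast hz') (y' y)
  refine le_antisymm (iInf₂_le_of_le w hw.ge (by simp [← hw]))
    (le_iInf₂ fun z hz => EReal.coe_le_coe_iff.mpr hz)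

theorem scal_lag (f : W → Set E) (g : W → Set F) (x : W) (y' : F →L[ℝ] ℝ) {z' : E →L[ℝ] ℝ}
    (hz' : z' ≠ 0) :
    scal z' (lag f g x y' z') = eadd (scal z' (f x)) (scal y' (g x)) := by
  simp only [lag, scal_closure, scal_add, scal_iUnion, scal_SMap y' hz']
  rfl

end

theorem scalarization_dualization_commute_general
    (f : X → Set Z) (g : X → Set Y)
    (y' : Y →L[ℝ] ℝ) (z' : Z →L[ℝ] ℝ) (hz0 : z' ≠ 0) :
    scal z' (dualObj f g y' z') = ⨅ x : X, eadd (scal z' (f x)) (scal y' (g x)) := by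
  rw [dualObj, scal_closure, scal_iUnion]
  exact iInf_congr fun x => scal_lag f g x y' hz0

/-- **Scalarization and dualization commute.** For all `y* ∈ Y*` and `z* ∈ C⁺∖{0}`:
`φ_{h,z*}(y*) = inf_{x ∈ X} λ_{z*}(x,y*)`, i.e.
`inf {z*(z) | z ∈ h(y*,z*)} = inf_x [φ_{f,z*}(x) + φ_{g,y*}(x)]`. -/
theorem scalarization_dualization_commute
    (C : Set Z) (hCconv : Convex ℝ C) (hCcone : ∀ t : ℝ, 0 < t → ∀ z ∈ C, t • z ∈ C)
    (hC0 : (0 : Z) ∈ C)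
    (D : Set Y) (hDconv : Convex ℝ D) (hDcone : ∀ t : ℝ, 0 < t → ∀ y ∈ D, t • y ∈ D)
    (hD0 : (0 : Y) ∈ D)
    (f : X → Set Z) (g : X → Set Y)
    (hfF : ∀ x, f x = closure (f x + C))
    (hgF : ∀ x, g x = closure (g x + D))
    (y' : Y →L[ℝ] ℝ) (z' : Z →L[ℝ] ℝ) (hz' : z' ∈ posDual C) (hz0 : z' ≠ 0) :
    scal z' (dualObj f g y' z') = ⨅ x : X, eadd (scal z' (f x)) (scal y' (g x)) :=
  scalarization_dualization_commute_general f g y' z' hz0
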